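/- arXiv:1710.00318 — 4 statements merged into one kernel-verified Lean document; each statement's English description precedes it below -/
import Mathlib

section
/- Parabolic lower bound: let J be a real symmetric N×N matrix with constant row sum j and smallest eigenvalue j_min < j. Then for every B ∈ ℝ and every spin configuration s (N unit vectors in ℝ³) with total spin S = Σ_μ s_μ, one has Σ_{μ,ν} J_{μν} s_μ·s_ν - B e·S ≥ j_min·N - N·B²/(4(j - j_min)), where e is the unit vector such that S = M·e. -/
/-!
Shifting a component vector `x` by a constant `c` changes `xᵀ J x` and `|x|²` by explicit amounts, because
the constant vector is an eigenvector of `J` with eigenvalue `j`. Feeding the shifted vector to the Rayleigh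
bound `xᵀ J x ≥ j_min |x|²` gives, for every `c`, a lower bound with the extra term `(j - j_min)(2 c Σx - N c²)`.
Summing over the three spin components with `c = t e` and `t = B / (2 (j - j_min))` makes that term cancel the
Zeeman energy exactly, leaving `j_min N - N B² / (4 (j - j_min))`.
-/

open Finset

variable {ι : Type*} [Fintype ι] {J : Matrix ι ι ℝ} {j jmin : ℝ}

lemma quadForm_sub_const (hsym : J.IsSymm) (hrow : ∀ μ, ∑ ν, J μ ν = j) (x : ι → ℝ) (c : ℝ) :
    ∑ μ, ∑ ν, J μ ν * (x μ - c) * (x ν - c) =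
      ∑ μ, ∑ ν, J μ ν * x μ * x ν - 2 * c * j * ∑ μ, x μ + c ^ 2 * j * Fintype.card ι := by
  have hcol : ∀ ν, ∑ μ, J μ ν = j := fun ν => by
    simpa only [hsym.apply] using hrow ν
  have hexpand : ∀ μ ν, J μ ν * (x μ - c) * (x ν - c) =
      J μ ν * x μ * x ν - c * (J μ ν * x μ) - c * (J μ ν * x ν) + c ^ 2 * J μ ν :=
    fun μ ν => by ring
  simp only [hexpand, sum_add_distrib, sum_sub_distrib, ← mul_sum, ← sum_mul, hrow]
  rw [sum_comm (f := fun μ ν => J μ ν * x ν)]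
  simp only [← sum_mul, hcol, ← mul_sum, sum_const, card_univ, nsmul_eq_mul]
  ring

lemma sum_sq_sub_const (x : ι → ℝ) (c : ℝ) :
    ∑ μ, (x μ - c) ^ 2 = ∑ μ, x μ ^ 2 - 2 * c * ∑ μ, x μ + c ^ 2 * Fintype.card ι := by
  simp only [sub_sq, sum_add_distrib, sum_sub_distrib, ← mul_sum, ← sum_mul, sum_const,
    card_univ, nsmul_eq_mul]
  ring

lemma rayleigh_bound_shift (hsym : J.IsSymm) (hrow : ∀ μ, ∑ ν, J μ ν = j)
    (hray : ∀ x : ι → ℝ, jmin * ∑ μ, x μ ^ 2 ≤ ∑ μ, ∑ ν, J μ ν * x μ * x ν)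
    (x : ι → ℝ) (c : ℝ) :
    jmin * ∑ μ, x μ ^ 2 + (j - jmin) * (2 * c * ∑ μ, x μ - c ^ 2 * Fintype.card ι) ≤
      ∑ μ, ∑ ν, J μ ν * x μ * x ν := by
  have h := hray (fun μ => x μ - c)
  rw [quadForm_sub_const hsym hrow, sum_sq_sub_const] at h
  linarith

lemma rayleigh_bound_shift_vec {κ : Type*} [Fintype κ] (hsym : J.IsSymm)
    (hrow : ∀ μ, ∑ ν, J μ ν = j)
    (hray : ∀ x : ι → ℝ, jmin * ∑ μ, x μ ^ 2 ≤ ∑ μ, ∑ ν, J μ ν * x μ * x ν)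
    (s : ι → κ → ℝ) (c : κ → ℝ) :
    jmin * ∑ μ, ∑ i, s μ i ^ 2 +
        (j - jmin) * (2 * ∑ i, c i * ∑ μ, s μ i - (∑ i, c i ^ 2) * Fintype.card ι) ≤
      ∑ μ, ∑ ν, J μ ν * ∑ i, s μ i * s ν i := by
  have h := sum_le_sum fun i (_ : i ∈ univ) => rayleigh_bound_shift hsym hrow hray (s · i) (c i)
  have hlhs : ∑ μ, ∑ ν, J μ ν * ∑ i, s μ i * s ν i = ∑ i, ∑ μ, ∑ ν, J μ ν * s μ i * s ν i := by
    simp only [mul_sum, ← mul_assoc]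
    exact (sum_congr rfl fun _ _ => sum_comm).trans sum_comm
  rw [hlhs, sum_comm (f := fun (μ : ι) (i : κ) => s μ i ^ 2)]
  refine (le_of_eq ?_).trans h
  simp only [sum_add_distrib, ← mul_sum, sum_sub_distrib, ← sum_mul, mul_assoc]

theorem stmt_9_general (n : ℕ) (J : Matrix (Fin n) (Fin n) ℝ)
    (hsym : J.IsSymm) (j jmin : ℝ) (hrow : ∀ μ, ∑ ν, J μ ν = j)
    (hray : ∀ x : Fin n → ℝ, jmin * ∑ μ, (x μ) ^ 2 ≤ ∑ μ, ∑ ν, J μ ν * x μ * x ν)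
    (hlt : jmin < j)
    (B : ℝ) (e : Fin 3 → ℝ) (he : ∑ i, e i ^ 2 = 1)
    (s : Fin n → Fin 3 → ℝ) (hs : ∀ μ, ∑ i, (s μ i) ^ 2 = 1) :
    jmin * n - n * B ^ 2 / (4 * (j - jmin)) ≤
      (∑ μ, ∑ ν, J μ ν * ∑ i, s μ i * s ν i) -
        B * ∑ i, e i * (∑ μ, s μ i) := by
  have hgap : j - jmin ≠ 0 := sub_ne_zero.mpr hlt.ne'
  set t := B / (2 * (j - jmin))
  have h := rayleigh_bound_shift_vec hsym hrow hray s (fun i => t * e i)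
  have hnorm : ∑ i, (t * e i) ^ 2 = t ^ 2 := by
    simp only [mul_pow, ← mul_sum, he, mul_one]
  have hzeeman : ∑ i, t * e i * ∑ μ, s μ i = t * ∑ i, e i * ∑ μ, s μ i := by
    simp only [mul_sum, mul_assoc]
  simp only [hs, sum_const, card_univ, Fintype.card_fin, nsmul_eq_mul, mul_one, hnorm,
    hzeeman] at h
  have hparabola : (j - jmin) * (2 * (t * ∑ i, e i * ∑ μ, s μ i) - t ^ 2 * n) =
      B * ∑ i, e i * ∑ μ, s μ i - n * B ^ 2 / (4 * (j - jmin)) := by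
    simp only [t]
    field_simp
    ring
  linarith

/-- Parabolic lower bound: for `J` symmetric with constant row sum `j` and smallest
eigenvalue `j_min < j`, every spin configuration `s` of unit vectors in `ℝ³` satisfies
`Σ J_{μν} s_μ·s_ν - B e·S ≥ j_min·N - N·B²/(4(j - j_min))`. -/
theorem stmt_9 (n : ℕ) (hn : 0 < n) (J : Matrix (Fin n) (Fin n) ℝ)
    (hsym : J.IsSymm) (j jmin : ℝ) (hrow : ∀ μ, ∑ ν, J μ ν = j)
    (heig : Module.End.HasEigenvalue (Matrix.toLin' J) jmin)
    (hray : ∀ x : Fin n → ℝ, jmin * ∑ μ, (x μ) ^ 2 ≤ ∑ μ, ∑ ν, J μ ν * x μ * x ν)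
    (hlt : jmin < j)
    (B : ℝ) (e : Fin 3 → ℝ) (he : ∑ i, e i ^ 2 = 1)
    (s : Fin n → Fin 3 → ℝ) (hs : ∀ μ, ∑ i, (s μ i) ^ 2 = 1) :
    jmin * n - n * B ^ 2 / (4 * (j - jmin)) ≤
      (∑ μ, ∑ ν, J μ ν * ∑ i, s μ i * s ν i) -
        B * ∑ i, e i * (∑ μ, s μ i) :=
  stmt_9_general n J hsym j jmin hrow hray hlt B e he s hs
end

section
/- If j = j_min (constant row sum equals smallest eigenvalue of J), then Σ_{μ,ν} J_{μν} s_μ·s_ν ≥ N·j for all spin configurations s of N unit vectors in ℝ³, and consequently H_min(B) = N(j - |B|) for all B ∈ ℝ, attained by the ferromagnetic configuration. -/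
open Finset

/-- Ferromagnetic case `j = j_min`: then `H_0(s) ≥ N·j` for all spin configurations,
and `H_min(B) = N(j - |B|)` for all `B`, attained by the ferromagnetic configuration. -/
theorem stmt_10 (n : ℕ) (hn : 0 < n) (J : Matrix (Fin n) (Fin n) ℝ)
    (hsym : J.IsSymm) (j : ℝ) (hrow : ∀ μ, ∑ ν, J μ ν = j)
    (hray : ∀ x : Fin n → ℝ, j * ∑ μ, (x μ) ^ 2 ≤ ∑ μ, ∑ ν, J μ ν * x μ * x ν)
    (e : Fin 3 → ℝ) (he : ∑ i, e i ^ 2 = 1) :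
    (∀ s : Fin n → Fin 3 → ℝ, (∀ μ, ∑ i, (s μ i) ^ 2 = 1) →
        (n : ℝ) * j ≤ ∑ μ, ∑ ν, J μ ν * ∑ i, s μ i * s ν i) ∧
    ∀ B : ℝ,
      sInf { E : ℝ | ∃ s : Fin n → Fin 3 → ℝ,
          (∀ μ, ∑ i, (s μ i) ^ 2 = 1) ∧
          (∃ c : ℝ, ∀ i, ∑ μ, s μ i = c * e i) ∧
          E = (∑ μ, ∑ ν, J μ ν * ∑ i, s μ i * s ν i) -
              B * ∑ i, (∑ μ, s μ i) * e i } = n * (j - |B|) := by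
  have h1 : ∀ s : Fin n → Fin 3 → ℝ, (∀ μ, ∑ i, (s μ i) ^ 2 = 1) →
      (n : ℝ) * j ≤ ∑ μ, ∑ ν, J μ ν * ∑ i, s μ i * s ν i := by
    intro s hs
    have hswap : ∑ μ, ∑ ν, J μ ν * ∑ i, s μ i * s ν i
        = ∑ i, ∑ μ, ∑ ν, J μ ν * s μ i * s ν i := by
      calc ∑ μ, ∑ ν, J μ ν * ∑ i, s μ i * s ν i
          = ∑ μ, ∑ ν, ∑ i, J μ ν * s μ i * s ν i := by
            refine Finset.sum_congr rfl fun μ _ => Finset.sum_congr rfl fun ν _ => ?_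
            rw [Finset.mul_sum]; exact Finset.sum_congr rfl fun i _ => by ring
        _ = ∑ μ, ∑ i, ∑ ν, J μ ν * s μ i * s ν i := by
            exact Finset.sum_congr rfl fun μ _ => Finset.sum_comm
        _ = ∑ i, ∑ μ, ∑ ν, J μ ν * s μ i * s ν i := Finset.sum_comm
    have hsum : ∑ i, (j * ∑ μ, (s μ i) ^ 2) = (n : ℝ) * j := by
      rw [← Finset.mul_sum, Finset.sum_comm]
      simp [hs]
      ring
    calc (n : ℝ) * j = ∑ i, (j * ∑ μ, (s μ i) ^ 2) := hsum.symm
      _ ≤ ∑ i, ∑ μ, ∑ ν, J μ ν * s μ i * s ν i :=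
          Finset.sum_le_sum fun i _ => hray (fun μ => s μ i)
      _ = _ := hswap.symm
  refine ⟨h1, fun B => ?_⟩
  set σ : ℝ := if 0 ≤ B then 1 else -1 with hσ
  have hσ2 : σ ^ 2 = 1 := by rcases le_or_gt 0 B with h | h <;> simp [hσ, h, not_le.mpr]
  have hσB : σ * B = |B| := by
    rcases le_or_gt 0 B with h | h
    · simp [hσ, h, abs_of_nonneg h]
    · simp [hσ, not_le.mpr h, abs_of_neg h]
  set s0 : Fin n → Fin 3 → ℝ := fun _ i => σ * e i with hs0
  have hs0unit : ∀ μ, ∑ i, (s0 μ i) ^ 2 = 1 := by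
    intro μ; simp only [hs0, mul_pow, ← Finset.mul_sum, he, hσ2, mul_one]
  have hmem : (n : ℝ) * (j - |B|) ∈ { E : ℝ | ∃ s : Fin n → Fin 3 → ℝ,
      (∀ μ, ∑ i, (s μ i) ^ 2 = 1) ∧
      (∃ c : ℝ, ∀ i, ∑ μ, s μ i = c * e i) ∧
      E = (∑ μ, ∑ ν, J μ ν * ∑ i, s μ i * s ν i) -
          B * ∑ i, (∑ μ, s μ i) * e i } := by
    refine ⟨s0, hs0unit, ⟨(n : ℝ) * σ, fun i => ?_⟩, ?_⟩
    · simp [hs0, mul_assoc]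
    · have h2 : ∀ μ ν : Fin n, (∑ i, s0 μ i * s0 ν i) = 1 := by
        intro μ ν
        have h2' : ∀ i : Fin 3, s0 μ i * s0 ν i = σ ^ 2 * e i ^ 2 := fun i => by
          show σ * e i * (σ * e i) = σ ^ 2 * e i ^ 2; ring
        simp only [h2', ← Finset.mul_sum, he, hσ2, mul_one]
      have hH0 : (∑ μ, ∑ ν, J μ ν * ∑ i, s0 μ i * s0 ν i) = (n : ℝ) * j := by
        calc ∑ μ, ∑ ν, J μ ν * ∑ i, s0 μ i * s0 ν i
            = ∑ μ, ∑ ν, J μ ν := by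
              refine Finset.sum_congr rfl fun μ _ => Finset.sum_congr rfl fun ν _ => ?_
              rw [h2 μ ν, mul_one]
          _ = ∑ _μ : Fin n, j := Finset.sum_congr rfl fun μ _ => hrow μ
          _ = (n : ℝ) * j := by
              rw [Finset.sum_const, Finset.card_univ, Fintype.card_fin, nsmul_eq_mul]
      have hZ : (∑ i, (∑ μ, s0 μ i) * e i) = (n : ℝ) * σ := by
        have h3 : ∀ i : Fin 3, (∑ μ, s0 μ i) * e i = (n : ℝ) * σ * e i ^ 2 := by
          intro i
          have h4 : (∑ μ : Fin n, s0 μ i) = (n : ℝ) * (σ * e i) := by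
            simp [hs0]
          rw [h4]; ring
        simp only [h3]
        rw [← Finset.mul_sum, he, mul_one]
      rw [hH0, hZ]
      have : B * ((n : ℝ) * σ) = (n : ℝ) * |B| := by rw [← hσB]; ring
      rw [this]; ring
  have hlb : ∀ E ∈ { E : ℝ | ∃ s : Fin n → Fin 3 → ℝ,
      (∀ μ, ∑ i, (s μ i) ^ 2 = 1) ∧
      (∃ c : ℝ, ∀ i, ∑ μ, s μ i = c * e i) ∧
      E = (∑ μ, ∑ ν, J μ ν * ∑ i, s μ i * s ν i) -
          B * ∑ i, (∑ μ, s μ i) * e i }, (n : ℝ) * (j - |B|) ≤ E := by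
    rintro E ⟨s, hs, ⟨c, hc⟩, rfl⟩
    have hceq : ∑ i, (∑ μ, s μ i) * e i = c := by
      have : ∀ i : Fin 3, (∑ μ, s μ i) * e i = c * e i ^ 2 := by
        intro i; rw [hc i]; ring
      simp only [this, ← Finset.mul_sum, he, mul_one]
    have hc2 : c = ∑ μ, ∑ i, s μ i * e i := by
      rw [← hceq]
      simp_rw [Finset.sum_mul]
      exact Finset.sum_comm
    have habs : ∀ μ, |∑ i, s μ i * e i| ≤ 1 := by
      intro μ
      have h := Finset.sum_mul_sq_le_sq_mul_sq Finset.univ (s μ) e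
      rw [hs μ, he, one_mul] at h
      exact (sq_le_one_iff_abs_le_one _).mp h
    have hcb : |c| ≤ (n : ℝ) := by
      rw [hc2]
      calc |∑ μ, ∑ i, s μ i * e i| ≤ ∑ μ, |∑ i, s μ i * e i| :=
            Finset.abs_sum_le_sum_abs _ _
        _ ≤ ∑ _μ : Fin n, (1 : ℝ) := Finset.sum_le_sum fun μ _ => habs μ
        _ = n := by simp
    have hBc : B * c ≤ |B| * n :=
      calc B * c ≤ |B * c| := le_abs_self _
        _ = |B| * |c| := abs_mul _ _
        _ ≤ |B| * n := mul_le_mul_of_nonneg_left hcb (abs_nonneg _)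
    have hH := h1 s hs
    rw [hceq]
    nlinarith [hH, hBc]
  exact le_antisymm (csInf_le ⟨(n : ℝ) * (j - |B|), hlb⟩ hmem) (le_csInf ⟨_, hmem⟩ hlb)
end

section
/- For N = 3 with coupling constants J₁, J₂, J₃, the 3×3 matrix Ĵ with diagonal entries (-J₂-J₃, -J₁-J₃, -J₁-J₂) and off-diagonal entries Ĵ₁₂ = J₃, Ĵ₁₃ = J₂, Ĵ₂₃ = J₁ is positive semidefinite if and only if J₁ + J₂ + J₃ ≤ -√(J₁² + J₂² + J₃²). -/
/-!
The quadratic form of `Ĵ` is `-(J₁ (x₂ - x₃)² + J₂ (x₁ - x₃)² + J₃ (x₁ - x₂)²)`, which depends only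
on `u = x₁ - x₃` and `v = x₂ - x₃`: it is the binary form `a u² + 2 J₃ u v + c v²` with
`a = -(J₂ + J₃)`, `c = -(J₁ + J₃)`. That form is nonnegative iff `a, c ≥ 0` and
`J₃² ≤ a c`, i.e. `J₁J₂ + J₂J₃ + J₃J₁ ≥ 0`. Since `(J₁ + J₂ + J₃)² = ∑ Jᵢ² + 2 (J₁J₂ + J₂J₃ + J₃J₁)`,
the same conditions say exactly that `J₁ + J₂ + J₃ ≤ -√(∑ Jᵢ²)`.
-/

open Matrix

theorem binary_form_nonneg_iff (a b c : ℝ) :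
    (∀ x y : ℝ, 0 ≤ a * x ^ 2 + 2 * b * x * y + c * y ^ 2) ↔ 0 ≤ a ∧ 0 ≤ c ∧ b ^ 2 ≤ a * c := by
  constructor
  · intro h
    have hdiscrim : discrim a (2 * b) c ≤ 0 :=
      discrim_le_zero fun x => by simpa [sq, mul_assoc] using h x 1
    refine ⟨by simpa using h 1 0, by simpa using h 0 1, ?_⟩
    rw [discrim] at hdiscrim
    linarith
  · rintro ⟨ha, hc, hb⟩ x y
    rcases ha.eq_or_lt with rfl | ha
    · have hb0 : b = 0 := by nlinarith
      subst hb0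
      nlinarith [mul_nonneg hc (sq_nonneg y)]
    · -- `a (a x² + 2 b x y + c y²) = (a x + b y)² + (a c - b²) y²`
      nlinarith [sq_nonneg (a * x + b * y), mul_nonneg (sub_nonneg.2 hb) (sq_nonneg y)]

theorem le_neg_sqrt_sum_sq_iff (J₁ J₂ J₃ : ℝ) :
    J₁ + J₂ + J₃ ≤ -Real.sqrt (J₁ ^ 2 + J₂ ^ 2 + J₃ ^ 2) ↔
      0 ≤ -(J₂ + J₃) ∧ 0 ≤ -(J₁ + J₃) ∧ J₃ ^ 2 ≤ -(J₂ + J₃) * -(J₁ + J₃) := by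
  rw [le_neg, Real.sqrt_le_iff]
  constructor
  · rintro ⟨hs, hsq⟩
    have he : 0 ≤ J₁ * J₂ + J₂ * J₃ + J₃ * J₁ := by nlinarith
    exact ⟨by nlinarith, by nlinarith, by nlinarith⟩
  · rintro ⟨ha, hc, hb⟩
    exact ⟨by nlinarith, by nlinarith⟩

def couplingMatrix (J₁ J₂ J₃ : ℝ) : Matrix (Fin 3) (Fin 3) ℝ :=
  !![-J₂ - J₃, J₃, J₂;
     J₃, -J₁ - J₃, J₁;
     J₂, J₁, -J₁ - J₂]

theorem couplingMatrix_isHermitian (J₁ J₂ J₃ : ℝ) : (couplingMatrix J₁ J₂ J₃).IsHermitian := by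
  ext i j
  fin_cases i <;> fin_cases j <;> simp [couplingMatrix]

theorem dotProduct_couplingMatrix_mulVec (J₁ J₂ J₃ : ℝ) (x : Fin 3 → ℝ) :
    x ⬝ᵥ (couplingMatrix J₁ J₂ J₃ *ᵥ x) =
      -(J₂ + J₃) * (x 0 - x 2) ^ 2 + 2 * J₃ * (x 0 - x 2) * (x 1 - x 2) +
        -(J₁ + J₃) * (x 1 - x 2) ^ 2 := by
  simp [couplingMatrix, dotProduct, mulVec, Fin.sum_univ_three]
  ring

theorem couplingMatrix_posSemidef_iff (J₁ J₂ J₃ : ℝ) :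
    (couplingMatrix J₁ J₂ J₃).PosSemidef ↔
      ∀ u v : ℝ, 0 ≤ -(J₂ + J₃) * u ^ 2 + 2 * J₃ * u * v + -(J₁ + J₃) * v ^ 2 := by
  simp only [posSemidef_iff_dotProduct_mulVec, star_trivial, dotProduct_couplingMatrix_mulVec,
    couplingMatrix_isHermitian, true_and]
  constructor
  · intro h u v
    simpa using h ![u, v, 0]
  · intro h x
    exact h _ _

/-- For `N = 3`: the matrix `Ĵ` with diagonal `(-J₂-J₃, -J₁-J₃, -J₁-J₂)` and
off-diagonal entries `J₃, J₂, J₁` is positive semidefinite iff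
`J₁ + J₂ + J₃ ≤ -√(J₁² + J₂² + J₃²)`. -/
theorem stmt_12 (J₁ J₂ J₃ : ℝ) :
    (Matrix.PosSemidef
      !![-J₂ - J₃, J₃, J₂;
         J₃, -J₁ - J₃, J₁;
         J₂, J₁, -J₁ - J₂]) ↔
    J₁ + J₂ + J₃ ≤ -Real.sqrt (J₁ ^ 2 + J₂ ^ 2 + J₃ ^ 2) := by
  rw [le_neg_sqrt_sum_sq_iff, ← binary_form_nonneg_iff]
  exact couplingMatrix_posSemidef_iff J₁ J₂ J₃
end

section
/- For the AF 3-chain, define E_min(μ) = -1 - |μ| for |μ| ≤ 1 and E_min(μ) = (μ² - 5)/2 for 1 ≤ |μ| ≤ 3. Then the negative Legendre-Fenchel transform H_min(b) = inf_{μ ∈ [-3,3]} (E_min(μ) - b·μ) equals -2 - |b| for |b| ≤ 1, -(5 + b²)/2 for 1 ≤ |b| ≤ 3, and 2 - 3|b| for |b| ≥ 3. -/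
lemma aux_inf_eq (b v μ0 : ℝ) (hμ0 : μ0 ∈ Set.Icc (-3:ℝ) 3)
    (hval : (if |μ0| ≤ 1 then -1 - |μ0| else (μ0 ^ 2 - 5) / 2) - b * μ0 = v)
    (hlb : ∀ μ ∈ Set.Icc (-3:ℝ) 3,
      v ≤ (if |μ| ≤ 1 then -1 - |μ| else (μ ^ 2 - 5) / 2) - b * μ) :
    sInf ((fun μ : ℝ => (if |μ| ≤ 1 then -1 - |μ| else (μ ^ 2 - 5) / 2) - b * μ) ''
      Set.Icc (-3) 3) = v := by
  apply le_antisymm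
  · exact csInf_le ⟨v, by rintro x ⟨μ, hμ, rfl⟩; exact hlb μ hμ⟩ ⟨μ0, hμ0, hval⟩
  · exact le_csInf ⟨_, ⟨μ0, hμ0, rfl⟩⟩ (by rintro x ⟨μ, hμ, rfl⟩; exact hlb μ hμ)

lemma aux_lb (b v μ : ℝ) (hμ : μ ∈ Set.Icc (-3:ℝ) 3)
    (h1 : |μ| ≤ 1 → v ≤ -1 - |μ| - b * μ)
    (h2 : 1 < |μ| → v ≤ (μ ^ 2 - 5) / 2 - b * μ) :
    v ≤ (if |μ| ≤ 1 then -1 - |μ| else (μ ^ 2 - 5) / 2) - b * μ := by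
  split_ifs with h
  · exact h1 h
  · exact h2 (lt_of_not_ge h)

/-- AF 3-chain: with `E_min(μ) = -1 - |μ|` for `|μ| ≤ 1` and `E_min(μ) = (μ² - 5)/2`
for `1 ≤ |μ| ≤ 3`, the negative Legendre-Fenchel transform
`H_min(b) = inf_{μ ∈ [-3,3]} (E_min(μ) - b·μ)` equals `-2 - |b|` for `|b| ≤ 1`,
`-(5 + b²)/2` for `1 ≤ |b| ≤ 3`, and `2 - 3|b|` for `|b| ≥ 3`. -/
theorem stmt_14 :
    ∀ b : ℝ,
      (|b| ≤ 1 →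
        sInf ((fun μ : ℝ => (if |μ| ≤ 1 then -1 - |μ| else (μ ^ 2 - 5) / 2) - b * μ) ''
          Set.Icc (-3) 3) = -2 - |b|) ∧
      (1 ≤ |b| → |b| ≤ 3 →
        sInf ((fun μ : ℝ => (if |μ| ≤ 1 then -1 - |μ| else (μ ^ 2 - 5) / 2) - b * μ) ''
          Set.Icc (-3) 3) = -(5 + b ^ 2) / 2) ∧
      (3 ≤ |b| →
        sInf ((fun μ : ℝ => (if |μ| ≤ 1 then -1 - |μ| else (μ ^ 2 - 5) / 2) - b * μ) ''
          Set.Icc (-3) 3) = 2 - 3 * |b|) := by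
  intro b
  refine ⟨?_, ?_, ?_⟩
  · intro hb
    rcases abs_cases b with ⟨hb1, hb2⟩ | ⟨hb1, hb2⟩ <;> rw [hb1] at hb ⊢
    · apply aux_inf_eq b _ 1 (by norm_num)
      · rw [if_pos (by norm_num), show |(1:ℝ)| = 1 by norm_num]; ring
      · intro μ hμ; simp only [Set.mem_Icc] at hμ
        refine aux_lb b _ μ (by simp [Set.mem_Icc]; exact hμ) (fun h => ?_) (fun h => ?_) <;>
          rcases abs_cases μ with ⟨e, h2⟩ | ⟨e, h2⟩ <;> (first | rw [e] at h ⊢ | rw [e] at h) <;>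
          nlinarith [hμ.1, hμ.2]
    · apply aux_inf_eq b _ (-1) (by norm_num)
      · rw [if_pos (by norm_num), show |(-1:ℝ)| = 1 by norm_num]; ring
      · intro μ hμ; simp only [Set.mem_Icc] at hμ
        refine aux_lb b _ μ (by simp [Set.mem_Icc]; exact hμ) (fun h => ?_) (fun h => ?_) <;>
          rcases abs_cases μ with ⟨e, h2⟩ | ⟨e, h2⟩ <;> (first | rw [e] at h ⊢ | rw [e] at h) <;>
          nlinarith [hμ.1, hμ.2]
  · intro hb hb3
    rcases abs_cases b with ⟨hb1, hb2⟩ | ⟨hb1, hb2⟩ <;> rw [hb1] at hb hb3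
    · apply aux_inf_eq b _ b ⟨by linarith, by linarith⟩
      · rcases eq_or_lt_of_le hb with h | h
        · rw [if_pos (by rw [abs_of_nonneg hb2, ← h]), abs_of_nonneg hb2, ← h]; ring
        · rw [if_neg (by rw [abs_of_nonneg hb2]; linarith)]; ring
      · intro μ hμ; simp only [Set.mem_Icc] at hμ
        refine aux_lb b _ μ (by simp [Set.mem_Icc]; exact hμ) (fun h => ?_) (fun h => ?_) <;>
          rcases abs_cases μ with ⟨e, h2⟩ | ⟨e, h2⟩ <;> (first | rw [e] at h ⊢ | rw [e] at h) <;>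
          nlinarith [hμ.1, hμ.2, sq_nonneg (μ - b), sq_nonneg (b - 1)]
    · apply aux_inf_eq b _ b ⟨by linarith, by linarith⟩
      · rcases eq_or_lt_of_le hb with h | h
        · rw [if_pos (by rw [abs_of_nonpos (by linarith)]; linarith),
            abs_of_nonpos (by linarith)]; nlinarith
        · rw [if_neg (by rw [abs_of_nonpos (by linarith)]; push_neg; linarith)]; ring
      · intro μ hμ; simp only [Set.mem_Icc] at hμ
        refine aux_lb b _ μ (by simp [Set.mem_Icc]; exact hμ) (fun h => ?_) (fun h => ?_) <;>
          rcases abs_cases μ with ⟨e, h2⟩ | ⟨e, h2⟩ <;> (first | rw [e] at h ⊢ | rw [e] at h) <;>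
          nlinarith [hμ.1, hμ.2, sq_nonneg (μ - b), sq_nonneg (b + 1)]
  · intro hb
    rcases abs_cases b with ⟨hb1, hb2⟩ | ⟨hb1, hb2⟩ <;> rw [hb1] at hb ⊢
    · apply aux_inf_eq b _ 3 (by norm_num)
      · rw [if_neg (by rw [show |(3:ℝ)| = 3 by norm_num]; norm_num)]; ring
      · intro μ hμ; simp only [Set.mem_Icc] at hμ
        refine aux_lb b _ μ (by simp [Set.mem_Icc]; exact hμ) (fun h => ?_) (fun h => ?_) <;>
          rcases abs_cases μ with ⟨e, h2⟩ | ⟨e, h2⟩ <;> (first | rw [e] at h ⊢ | rw [e] at h) <;>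
          nlinarith [hμ.1, hμ.2]
    · apply aux_inf_eq b _ (-3) (by norm_num)
      · rw [if_neg (by rw [show |(-3:ℝ)| = 3 by norm_num]; norm_num)]; ring
      · intro μ hμ; simp only [Set.mem_Icc] at hμ
        refine aux_lb b _ μ (by simp [Set.mem_Icc]; exact hμ) (fun h => ?_) (fun h => ?_) <;>
          rcases abs_cases μ with ⟨e, h2⟩ | ⟨e, h2⟩ <;> (first | rw [e] at h ⊢ | rw [e] at h) <;>
          nlinarith [hμ.1, hμ.2]
end
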